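/- For all parameters α > 0, λ > 0, c > 0, β > 0 and every natural number r, the r-th moment of the OGE-G distribution admits the series representation ∫₀^∞ x^r f(x; α, λ, c, β) dx = Σ_{i=0}^∞ α β λ (-1)^i C(β-1, i) · ∫₀^∞ x^r e^{c x} · exp((λ/c)·(e^{c x} - 1)) · exp(-α(i+1)·(exp((λ/c)·(e^{c x} - 1)) - 1)) dx, where the series on the right converges and each integral on the right is finite. -/

import Mathlib

/-- The probability density function of the OGE-G distribution. -/
noncomputable def ogeG_pdf (α lam c β x : ℝ) : ℝ :=
  α * β * lam * Real.exp (c * x) * Real.exp (lam / c * (Real.exp (c * x) - 1)) *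
    Real.exp (-α * (Real.exp (lam / c * (Real.exp (c * x) - 1)) - 1)) *
    (1 - Real.exp (-α * (Real.exp (lam / c * (Real.exp (c * x) - 1)) - 1))) ^ (β - 1)

/-- The generalized binomial coefficient `C(s, i) = s(s-1)⋯(s-i+1)/i!`. -/
noncomputable def gchoose (s : ℝ) (i : ℕ) : ℝ :=
  (∏ k ∈ Finset.range i, (s - k)) / (Nat.factorial i)

/-!
Write `G(x) = exp((λ/c)(e^{cx} - 1))` and `u = exp(-α(G - 1))`, which lies in `(0, 1)` for `x > 0`.
Then `x^r f = αβλ x^r e^{cx} G u (1 - u)^{β-1}`, and the binomial series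
`(1 - u)^{β-1} = Σ (-1)^i C(β-1, i) u^i` turns `x^r e^{cx} G u · u^i` into the `i`-th integrand.
Summation and integration commute by dominated convergence: the coefficients `(-1)^i C(β-1, i)`
have constant sign from `i = ⌈β - 1⌉` on, so the partial sums are bounded by `(1 - u)^{β-1} + D`.
Every integrand is integrable because `e^{cx} G e^{-K(G-1)} ≤ C e^{-Kλx/2}` and, near `0`,
`(1 - u)^{β-1} ≤ (αλx)^{β-1} e^{-(β-1)α(G-1)}` when `β < 1`.
-/

open Real Finset Filter MeasureTheory Topology

theorem gchoose_eq_ringChoose (s : ℝ) (i : ℕ) : gchoose s i = Ring.choose s i := by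
  rw [Ring.choose_eq_smul, ← Polynomial.aeval_eq_smeval, Polynomial.aeval_def,
    ← Polynomial.eval_map, descPochhammer_map, descPochhammer_eval_eq_prod_range, gchoose,
    smul_eq_mul, div_eq_inv_mul]

theorem hasSum_gchoose_mul_pow (s : ℝ) {y : ℝ} (hy : |y| < 1) :
    HasSum (fun i => gchoose s i * y ^ i) ((1 + y) ^ s) := by
  have := (Real.one_add_rpow_hasFPowerSeriesOnBall_zero (a := s)).hasSum (y := y)
    (by simpa [edist_dist] using hy)
  simpa [binomialSeries, FormalMultilinearSeries.ofScalars_apply_eq, gchoose_eq_ringChoose,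
    mul_comm] using this

theorem hasSum_neg_one_pow_mul_gchoose_mul_pow (s : ℝ) {u : ℝ} (hu : |u| < 1) :
    HasSum (fun i => (-1) ^ i * gchoose s i * u ^ i) ((1 - u) ^ s) := by
  simpa [← sub_eq_add_neg, neg_pow u, mul_assoc, mul_left_comm] using
    hasSum_gchoose_mul_pow s (y := -u) (by rwa [abs_neg])

theorem neg_one_pow_mul_gchoose_succ (s : ℝ) (i : ℕ) :
    (-1) ^ (i + 1) * gchoose s (i + 1) = (-1) ^ i * gchoose s i * ((i - s) / (i + 1)) := by
  simp only [gchoose, prod_range_succ, Nat.factorial_succ, pow_succ]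
  push_cast
  field_simp
  ring

theorem exists_abs_neg_one_pow_mul_gchoose_eq_mul (s : ℝ) :
    ∃ σ : ℝ, |σ| = 1 ∧ ∀ i, ⌈s⌉₊ ≤ i →
      |(-1) ^ i * gchoose s i| = σ * ((-1) ^ i * gchoose s i) := by
  obtain ⟨σ, hσ, h₀⟩ : ∃ σ : ℝ, |σ| = 1 ∧ 0 ≤ σ * ((-1) ^ ⌈s⌉₊ * gchoose s ⌈s⌉₊) := by
    rcases le_total 0 ((-1) ^ ⌈s⌉₊ * gchoose s ⌈s⌉₊) with h | h
    · exact ⟨1, by simp, by simpa⟩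
    · exact ⟨-1, by simp, by simpa⟩
  refine ⟨σ, hσ, fun i hi => ?_⟩
  -- past `⌈s⌉₊` the ratio `(i - s) / (i + 1)` of consecutive coefficients is nonnegative
  have hsign : 0 ≤ σ * ((-1) ^ i * gchoose s i) := by
    induction i, hi using Nat.le_induction with
    | base => exact h₀
    | succ i hi ih =>
      have hs : s ≤ i := (Nat.le_ceil s).trans (by exact_mod_cast hi)
      rw [neg_one_pow_mul_gchoose_succ, ← mul_assoc]
      exact mul_nonneg ih (div_nonneg (sub_nonneg.2 hs) (by positivity))
  rw [← abs_of_nonneg hsign, abs_mul σ, hσ, one_mul]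

theorem exists_abs_sum_range_neg_one_pow_mul_gchoose_mul_pow_le (s : ℝ) :
    ∃ D : ℝ, ∀ u : ℝ, 0 ≤ u → u < 1 → ∀ N : ℕ,
      |∑ i ∈ range N, (-1) ^ i * gchoose s i * u ^ i| ≤ (1 - u) ^ s + D := by
  obtain ⟨σ, hσ, habs⟩ := exists_abs_neg_one_pow_mul_gchoose_eq_mul s
  set b : ℕ → ℝ := fun i => (-1) ^ i * gchoose s i
  set c : ℕ → ℝ := fun i => if i ∈ range ⌈s⌉₊ then 2 * |b i| else 0
  refine ⟨∑ i ∈ range ⌈s⌉₊, c i, fun u hu₀ hu₁ N => ?_⟩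
  have hpow : ∀ i, 0 ≤ u ^ i ∧ u ^ i ≤ 1 := fun i => ⟨pow_nonneg hu₀ i, pow_le_one₀ hu₀ hu₁.le⟩
  have hdom : ∀ i, |b i * u ^ i| ≤ σ * (b i * u ^ i) + c i := by
    intro i
    rw [abs_mul, abs_of_nonneg (hpow i).1]
    by_cases hi : i ∈ range ⌈s⌉₊
    · have : |σ * (b i * u ^ i)| ≤ |b i| := by
        rw [abs_mul, hσ, one_mul, abs_mul, abs_of_nonneg (hpow i).1]
        exact mul_le_of_le_one_right (abs_nonneg _) (hpow i).2
      have : |b i| * u ^ i ≤ |b i| := mul_le_of_le_one_right (abs_nonneg _) (hpow i).2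
      simp only [c, if_pos hi]
      linarith [neg_abs_le (σ * (b i * u ^ i))]
    · simp only [c, if_neg hi, add_zero]
      rw [habs i (by simpa using hi), mul_assoc]
  have hsum : HasSum (fun i => σ * (b i * u ^ i) + c i)
      (σ * (1 - u) ^ s + ∑ i ∈ range ⌈s⌉₊, c i) :=
    ((hasSum_neg_one_pow_mul_gchoose_mul_pow s (abs_lt.2 ⟨by linarith, hu₁⟩)).mul_left σ).add
      (hasSum_sum_of_ne_finset_zero fun i hi => if_neg hi)
  have hσs : σ * (1 - u) ^ s ≤ (1 - u) ^ s :=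
    mul_le_of_le_one_left (rpow_nonneg (by linarith) s) (hσ ▸ le_abs_self σ)
  calc |∑ i ∈ range N, b i * u ^ i| ≤ ∑ i ∈ range N, |b i * u ^ i| := abs_sum_le_sum_abs _ _
    _ ≤ ∑ i ∈ range N, (σ * (b i * u ^ i) + c i) := sum_le_sum fun i _ => hdom i
    _ ≤ σ * (1 - u) ^ s + ∑ i ∈ range ⌈s⌉₊, c i :=
        sum_le_hasSum _ (fun i _ => (abs_nonneg _).trans (hdom i)) hsum
    _ ≤ (1 - u) ^ s + ∑ i ∈ range ⌈s⌉₊, c i := by linarith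

theorem tendsto_sum_neg_one_pow_mul_gchoose_mul_integral {X : Type*} [MeasurableSpace X]
    {μ : Measure X} {h u : X → ℝ} {s : ℝ} (hh : Integrable h μ)
    (hhu : Integrable (fun x => h x * (1 - u x) ^ s) μ) (hu_meas : AEStronglyMeasurable u μ)
    (hu : ∀ᵐ x ∂μ, 0 ≤ u x ∧ u x < 1) :
    Tendsto (fun N => ∑ i ∈ range N, (-1) ^ i * gchoose s i * ∫ x, h x * u x ^ i ∂μ) atTop
      (𝓝 (∫ x, h x * (1 - u x) ^ s ∂μ)) := by
  obtain ⟨D, hD⟩ := exists_abs_sum_range_neg_one_pow_mul_gchoose_mul_pow_le s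
  have hint : ∀ i : ℕ, Integrable (fun x => h x * u x ^ i) μ := fun i =>
    hh.mono (hh.aestronglyMeasurable.mul (hu_meas.pow i)) <| by
      filter_upwards [hu] with x hx
      rw [norm_mul, norm_pow, Real.norm_of_nonneg hx.1]
      exact mul_le_of_le_one_right (norm_nonneg _) (pow_le_one₀ hx.1 hx.2.le)
  have hlim : Tendsto (fun N => ∫ x, h x * ∑ i ∈ range N, (-1) ^ i * gchoose s i * u x ^ i ∂μ)
      atTop (𝓝 (∫ x, h x * (1 - u x) ^ s ∂μ)) := by
    refine tendsto_integral_of_dominated_convergence (fun x => ‖h x * (1 - u x) ^ s‖ + D * ‖h x‖)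
      (fun N => hh.aestronglyMeasurable.mul ?_) (hhu.norm.add (hh.norm.const_mul D))
      (fun N => ?_) ?_
    · exact Finset.aestronglyMeasurable_fun_sum _ fun i _ =>
        aestronglyMeasurable_const.mul (hu_meas.pow i)
    · filter_upwards [hu] with x hx
      simp only [norm_mul, Real.norm_eq_abs]
      rw [abs_of_nonneg (rpow_nonneg (by linarith) s)]
      linarith [mul_le_mul_of_nonneg_left (hD (u x) hx.1 hx.2 N) (abs_nonneg (h x))]
    · filter_upwards [hu] with x hx
      exact ((hasSum_neg_one_pow_mul_gchoose_mul_pow s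
        (abs_lt.2 ⟨by linarith, hx.2⟩)).tendsto_sum_nat).const_mul (h x)
  refine hlim.congr fun N => ?_
  simp_rw [mul_sum]
  rw [integral_finsetSum _ fun i _ => ((hint i).const_mul ((-1) ^ i * gchoose s i)).congr
    (ae_of_all _ fun x => by ring)]
  refine sum_congr rfl fun i _ => ?_
  rw [← integral_const_mul]
  congr 1 with x
  ring

noncomputable def gompertzInvSurvival (lam c x : ℝ) : ℝ := exp (lam / c * (exp (c * x) - 1))

section Gompertz

variable {lam c : ℝ}

theorem gompertzInvSurvival_pos (x : ℝ) : 0 < gompertzInvSurvival lam c x := exp_pos _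

theorem continuous_gompertzInvSurvival : Continuous (gompertzInvSurvival lam c) := by
  unfold gompertzInvSurvival
  fun_prop

theorem mul_le_gompertzInvSurvival_sub_one (hlam : 0 < lam) (hc : 0 < c) (x : ℝ) :
    lam * x ≤ gompertzInvSurvival lam c x - 1 := by
  have hcx : lam * x ≤ lam / c * (exp (c * x) - 1) := by
    calc lam * x = lam / c * (c * x) := by field_simp
      _ ≤ lam / c * (exp (c * x) - 1) := by
        gcongr
        linarith [add_one_le_exp (c * x)]
  unfold gompertzInvSurvival
  linarith [add_one_le_exp (lam / c * (exp (c * x) - 1))]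

theorem exp_mul_le_one_add_mul_gompertzInvSurvival_sub_one (hlam : 0 < lam) (hc : 0 < c) (x : ℝ) :
    exp (c * x) ≤ 1 + c / lam * (gompertzInvSurvival lam c x - 1) := by
  have h := add_one_le_exp (lam / c * (exp (c * x) - 1))
  have : c / lam * (lam / c * (exp (c * x) - 1)) = exp (c * x) - 1 := by field_simp
  unfold gompertzInvSurvival
  nlinarith [div_pos hc hlam]

theorem one_add_mul_le_max_mul_exp {p m t : ℝ} (hm : 0 < m) (ht : 0 ≤ t) :
    1 + p * t ≤ max 1 (p / m) * exp (m * t) := by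
  have hp : p ≤ max 1 (p / m) * m := (div_le_iff₀ hm).1 (le_max_right _ _)
  calc 1 + p * t ≤ max 1 (p / m) * (1 + m * t) := by
        nlinarith [le_max_left 1 (p / m), mul_le_mul_of_nonneg_right hp ht]
    _ ≤ max 1 (p / m) * exp (m * t) :=
        mul_le_mul_of_nonneg_left (by linarith [add_one_le_exp (m * t)])
          (zero_le_one.trans (le_max_left 1 (p / m)))

-- `e^{cx}` and `G` are both at most affine in `G - 1 ≥ λx`, so `e^{-K(G-1)}` absorbs them
theorem exists_exp_mul_gompertzInvSurvival_mul_exp_le (hlam : 0 < lam) (hc : 0 < c) {K : ℝ}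
    (hK : 0 < K) : ∃ C : ℝ, ∀ x, 0 ≤ x →
      exp (c * x) * gompertzInvSurvival lam c x * exp (-K * (gompertzInvSurvival lam c x - 1)) ≤
        C * exp (-(K * lam / 2) * x) := by
  set M₁ := max 1 (c / lam / (K / 4))
  set M₂ := max 1 (1 / (K / 4))
  refine ⟨M₁ * M₂, fun x hx => ?_⟩
  set t := gompertzInvSurvival lam c x - 1
  have hlt : lam * x ≤ t := mul_le_gompertzInvSurvival_sub_one hlam hc x
  have ht : 0 ≤ t := (mul_nonneg hlam.le hx).trans hlt
  have h₁ : exp (c * x) ≤ M₁ * exp (K / 4 * t) :=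
    (exp_mul_le_one_add_mul_gompertzInvSurvival_sub_one hlam hc x).trans
      (one_add_mul_le_max_mul_exp (by positivity) ht)
  have h₂ : gompertzInvSurvival lam c x ≤ M₂ * exp (K / 4 * t) := by
    have := one_add_mul_le_max_mul_exp (p := 1) (m := K / 4) (by positivity) ht
    rwa [one_mul, add_sub_cancel] at this
  have hM : 0 ≤ M₁ * M₂ :=
    mul_nonneg (zero_le_one.trans (le_max_left _ _)) (zero_le_one.trans (le_max_left _ _))
  calc exp (c * x) * gompertzInvSurvival lam c x * exp (-K * t)
      ≤ M₁ * exp (K / 4 * t) * (M₂ * exp (K / 4 * t)) * exp (-K * t) :=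
        mul_le_mul_of_nonneg_right (mul_le_mul h₁ h₂ (exp_nonneg _) ((exp_nonneg _).trans h₁))
          (exp_nonneg _)
    _ = M₁ * M₂ * exp (-(K / 2) * t) := by
        rw [mul_mul_mul_comm, mul_assoc, ← exp_add, ← exp_add]; ring_nf
    _ ≤ M₁ * M₂ * exp (-(K * lam / 2) * x) :=
        mul_le_mul_of_nonneg_left (exp_le_exp.2 (by nlinarith)) hM

theorem integrableOn_rpow_mul_exp_mul_gompertzInvSurvival_mul_exp (hlam : 0 < lam) (hc : 0 < c)
    {s K : ℝ} (hs : -1 < s) (hK : 0 < K) :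
    IntegrableOn (fun x => x ^ s * exp (c * x) * gompertzInvSurvival lam c x *
      exp (-K * (gompertzInvSurvival lam c x - 1))) (Set.Ioi 0) := by
  obtain ⟨C, hC⟩ := exists_exp_mul_gompertzInvSurvival_mul_exp_le hlam hc hK
  have hdom :
      IntegrableOn (fun x => C * (x ^ s * exp (-(K * lam / 2) * x ^ (1 : ℝ)))) (Set.Ioi 0) :=
    (integrableOn_rpow_mul_exp_neg_mul_rpow hs one_pos (by positivity)).const_mul C
  refine hdom.mono' ?_ (ae_restrict_of_forall_mem measurableSet_Ioi fun x (hx : 0 < x) => ?_)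
  · unfold gompertzInvSurvival
    exact (by fun_prop : Measurable _).aestronglyMeasurable
  · have hxs : 0 ≤ x ^ s := rpow_nonneg hx.le s
    rw [Real.norm_of_nonneg (by unfold gompertzInvSurvival; positivity), rpow_one]
    calc x ^ s * exp (c * x) * gompertzInvSurvival lam c x *
          exp (-K * (gompertzInvSurvival lam c x - 1))
        = x ^ s * (exp (c * x) * gompertzInvSurvival lam c x *
          exp (-K * (gompertzInvSurvival lam c x - 1))) := by ring
      _ ≤ x ^ s * (C * exp (-(K * lam / 2) * x)) := mul_le_mul_of_nonneg_left (hC x hx.le) hxs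
      _ = C * (x ^ s * exp (-(K * lam / 2) * x)) := by ring

theorem exp_neg_lt_one_gompertzInvSurvival (hlam : 0 < lam) (hc : 0 < c) {α x : ℝ} (hα : 0 < α)
    (hx : 0 < x) : exp (-α * (gompertzInvSurvival lam c x - 1)) < 1 := by
  rw [exp_lt_one_iff, neg_mul, neg_lt_zero]
  exact mul_pos hα ((mul_pos hlam hx).trans_le (mul_le_gompertzInvSurvival_sub_one hlam hc x))

end Gompertz

theorem exp_neg_mul_one_sub_exp_neg_rpow_le {v w β : ℝ} (hw : 0 < w) (hwv : w ≤ v) (hβ : 0 < β) :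
    exp (-v) * (1 - exp (-v)) ^ (β - 1) ≤ w ^ (β - 1) * exp (-(β * v)) + exp (-v) := by
  have hv : 0 < v := hw.trans_le hwv
  have hu : exp (-v) < 1 := exp_lt_one_iff.2 (neg_lt_zero.2 hv)
  rcases le_or_gt 1 β with hβ₁ | hβ₁
  · have : (1 - exp (-v)) ^ (β - 1) ≤ 1 :=
      rpow_le_one (by linarith) (by linarith [exp_pos (-v)]) (by linarith)
    nlinarith [exp_pos (-v), rpow_nonneg hw.le (β - 1), exp_pos (-(β * v))]
  · -- `1 - e^{-v} ≥ v e^{-v}` because `e^v ≥ 1 + v`, and `t ↦ t^{β-1}` is decreasing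
    have hve : v * exp (-v) ≤ 1 - exp (-v) := by
      have := add_one_le_exp v
      have : exp v * exp (-v) = 1 := by rw [← exp_add, add_neg_cancel, exp_zero]
      nlinarith [exp_pos (-v)]
    calc exp (-v) * (1 - exp (-v)) ^ (β - 1)
        ≤ exp (-v) * (w ^ (β - 1) * exp (-v) ^ (β - 1)) := by
          gcongr
          calc (1 - exp (-v)) ^ (β - 1) ≤ (v * exp (-v)) ^ (β - 1) :=
                rpow_le_rpow_of_nonpos (by positivity) hve (by linarith)
            _ = v ^ (β - 1) * exp (-v) ^ (β - 1) := mul_rpow hv.le (exp_pos _).le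
            _ ≤ w ^ (β - 1) * exp (-v) ^ (β - 1) :=
                mul_le_mul_of_nonneg_right (rpow_le_rpow_of_nonpos hw hwv (by linarith))
                  (rpow_nonneg (exp_pos _).le _)
      _ = w ^ (β - 1) * exp (-(β * v)) := by
          rw [← exp_mul, mul_left_comm, ← exp_add]; ring_nf
      _ ≤ w ^ (β - 1) * exp (-(β * v)) + exp (-v) := le_add_of_nonneg_right (exp_pos _).le

section OGEG

variable {α lam c β : ℝ}

theorem ogeG_pdf_eq (α lam c β x : ℝ) :
    ogeG_pdf α lam c β x = α * β * lam * (exp (c * x) * gompertzInvSurvival lam c x) *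
      (exp (-(α * (gompertzInvSurvival lam c x - 1))) *
        (1 - exp (-(α * (gompertzInvSurvival lam c x - 1)))) ^ (β - 1)) := by
  simp only [ogeG_pdf, gompertzInvSurvival, neg_mul]
  ring

theorem pow_mul_ogeG_pdf_le (hα : 0 < α) (hlam : 0 < lam) (hc : 0 < c) (hβ : 0 < β) (r : ℕ)
    {x : ℝ} (hx : 0 < x) :
    x ^ r * ogeG_pdf α lam c β x ≤ α * β * lam *
      ((α * lam) ^ (β - 1) * (x ^ ((r : ℝ) + (β - 1)) * exp (c * x) * gompertzInvSurvival lam c x *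
          exp (-(α * β) * (gompertzInvSurvival lam c x - 1))) +
        x ^ (r : ℝ) * exp (c * x) * gompertzInvSurvival lam c x *
          exp (-α * (gompertzInvSurvival lam c x - 1))) := by
  set G := gompertzInvSurvival lam c x
  have hwv : α * lam * x ≤ α * (G - 1) := by
    rw [mul_assoc]
    exact mul_le_mul_of_nonneg_left (mul_le_gompertzInvSurvival_sub_one hlam hc x) hα.le
  have hβv : -(β * (α * (G - 1))) = -(α * β) * (G - 1) := by ring
  calc x ^ r * ogeG_pdf α lam c β x
      = α * β * lam * x ^ r * exp (c * x) * G *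
          (exp (-(α * (G - 1))) * (1 - exp (-(α * (G - 1)))) ^ (β - 1)) := by
        rw [ogeG_pdf_eq]; ring
    _ ≤ α * β * lam * x ^ r * exp (c * x) * G *
          ((α * lam * x) ^ (β - 1) * exp (-(β * (α * (G - 1)))) + exp (-(α * (G - 1)))) :=
        mul_le_mul_of_nonneg_left
          (exp_neg_mul_one_sub_exp_neg_rpow_le (by positivity) hwv hβ)
          (mul_nonneg (by positivity) (gompertzInvSurvival_pos x).le)
    _ = _ := by
        rw [hβv, mul_rpow (by positivity) hx.le, rpow_add hx, rpow_natCast, neg_mul α]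
        ring

theorem ogeG_pdf_nonneg (hα : 0 < α) (hlam : 0 < lam) (hc : 0 < c) (hβ : 0 < β) {x : ℝ}
    (hx : 0 < x) :
    0 ≤ ogeG_pdf α lam c β x := by
  have hu := exp_neg_lt_one_gompertzInvSurvival hlam hc hα hx
  rw [neg_mul] at hu
  rw [ogeG_pdf_eq]
  have : 0 ≤ (1 - exp (-(α * (gompertzInvSurvival lam c x - 1)))) ^ (β - 1) :=
    rpow_nonneg (by linarith) _
  exact mul_nonneg (mul_nonneg (by positivity) (by unfold gompertzInvSurvival; positivity))
    (mul_nonneg (exp_pos _).le this)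

theorem integrableOn_pow_mul_ogeG_pdf (hα : 0 < α) (hlam : 0 < lam) (hc : 0 < c) (hβ : 0 < β)
    (r : ℕ) : IntegrableOn (fun x => x ^ r * ogeG_pdf α lam c β x) (Set.Ioi 0) := by
  have hr : (-1 : ℝ) < r := by linarith [r.cast_nonneg (α := ℝ)]
  refine ((((integrableOn_rpow_mul_exp_mul_gompertzInvSurvival_mul_exp hlam hc
    (by linarith : -1 < (r : ℝ) + (β - 1)) (mul_pos hα hβ)).const_mul ((α * lam) ^ (β - 1))).add
      (integrableOn_rpow_mul_exp_mul_gompertzInvSurvival_mul_exp hlam hc hr hα)).const_mul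
        (α * β * lam)).mono' ?_
      (ae_restrict_of_forall_mem measurableSet_Ioi fun x (hx : 0 < x) => ?_)
  · unfold ogeG_pdf
    exact (by fun_prop : Measurable _).aestronglyMeasurable
  · rw [Real.norm_of_nonneg (mul_nonneg (pow_nonneg hx.le r) (ogeG_pdf_nonneg hα hlam hc hβ hx))]
    exact pow_mul_ogeG_pdf_le hα hlam hc hβ r hx

end OGEG

/-- Series representation of the `r`-th moment of the OGE-G distribution:
each integral `∫₀^∞ x^r e^{cx} e^{(λ/c)(e^{cx}-1)} e^{-α(i+1)(e^{(λ/c)(e^{cx}-1)}-1)} dx`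
is finite, and the series
`Σ_i α β λ (-1)^i C(β-1, i) ∫₀^∞ ⋯ dx` converges to `∫₀^∞ x^r f(x) dx`. -/
theorem ogeG_moment_series_representation (α lam c β : ℝ)
    (hα : 0 < α) (hlam : 0 < lam) (hc : 0 < c) (hβ : 0 < β) (r : ℕ) :
    (∀ i : ℕ, MeasureTheory.IntegrableOn
      (fun x : ℝ => x ^ r * Real.exp (c * x) *
        Real.exp (lam / c * (Real.exp (c * x) - 1)) *
        Real.exp (-(α * (i + 1)) * (Real.exp (lam / c * (Real.exp (c * x) - 1)) - 1)))
      (Set.Ioi 0)) ∧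
    Filter.Tendsto
      (fun N : ℕ => ∑ i ∈ Finset.range N,
        α * β * lam * (-1 : ℝ) ^ i * gchoose (β - 1) i *
          ∫ x in Set.Ioi (0 : ℝ), x ^ r * Real.exp (c * x) *
            Real.exp (lam / c * (Real.exp (c * x) - 1)) *
            Real.exp (-(α * (i + 1)) *
              (Real.exp (lam / c * (Real.exp (c * x) - 1)) - 1)))
      Filter.atTop
      (nhds (∫ x in Set.Ioi (0 : ℝ), x ^ r * ogeG_pdf α lam c β x)) := by
  have hr : (-1 : ℝ) < r := by linarith [r.cast_nonneg (α := ℝ)]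
  have hterm (K : ℝ) (hK : 0 < K) : IntegrableOn (fun x => x ^ r * exp (c * x) *
      gompertzInvSurvival lam c x * exp (-K * (gompertzInvSurvival lam c x - 1))) (Set.Ioi 0) := by
    simpa only [rpow_natCast] using
      integrableOn_rpow_mul_exp_mul_gompertzInvSurvival_mul_exp hlam hc hr hK
  refine ⟨fun i => hterm _ (by positivity), ?_⟩
  set u := fun x => exp (-α * (gompertzInvSurvival lam c x - 1))
  set h := fun x => α * β * lam * (x ^ r * exp (c * x) * gompertzInvSurvival lam c x * u x)
  have hpdf : (fun x => h x * (1 - u x) ^ (β - 1)) = fun x => x ^ r * ogeG_pdf α lam c β x := by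
    ext x
    simp only [h, u, ogeG_pdf_eq, neg_mul]
    ring
  have hpow (i : ℕ) (x : ℝ) : h x * u x ^ i = α * β * lam * (x ^ r * exp (c * x) *
      gompertzInvSurvival lam c x * exp (-(α * (i + 1)) * (gompertzInvSurvival lam c x - 1))) := by
    simp only [h, u, ← exp_nat_mul, mul_assoc, ← exp_add]
    ring_nf
  have key := tendsto_sum_neg_one_pow_mul_gchoose_mul_integral (h := h) (u := u) (s := β - 1)
    ((hterm α hα).const_mul (α * β * lam)) (hpdf ▸ integrableOn_pow_mul_ogeG_pdf hα hlam hc hβ r)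
    (continuous_exp.comp (continuous_const.mul
      (continuous_gompertzInvSurvival.sub continuous_const))).aestronglyMeasurable
    (ae_restrict_of_forall_mem measurableSet_Ioi fun x (hx : 0 < x) =>
      ⟨(exp_pos _).le, exp_neg_lt_one_gompertzInvSurvival hlam hc hα hx⟩)
  rw [hpdf] at key
  refine key.congr fun N => sum_congr rfl fun i _ => ?_
  simp only [hpow, integral_const_mul, gompertzInvSurvival]
  ring
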